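/- Let V and S be automorphisms of a probability space (X, μ), let n ≥ 2, let b > 0, and let E be a measurable set such that E, SE, …, S^{n−1}E are pairwise disjoint and μ(E ∩ VⁱE) < b for every i = 1, …, n−1 (which holds in particular whenever |μ(Vⁱ E ∩ E) − μ(Sⁱ E ∩ E)| < b for all i = 1, …, n−1). Define Ẽ = E ∖ (VE ∪ V²E ∪ … ∪ V^{n−1}E). Then the sets Ẽ, VẼ, …, V^{n−1}Ẽ are pairwise disjoint, and μ(E Δ Ẽ) < (n−1)·b. -/

import Mathlib

open MeasureTheory Filter Set
open scoped symmDiff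

variable {X : Type*} [MeasurableSpace X]

/-- `n`-th iterate of a measurable equivalence, `n : ℕ`. -/
def mnpow (T : X ≃ᵐ X) : ℕ → X ≃ᵐ X
  | 0 => MeasurableEquiv.refl X
  | n + 1 => (mnpow T n).trans T

/-- `n`-th iterate of a measurable equivalence, `n : ℤ`; negative powers are
iterates of the inverse. -/
def mzpow (T : X ≃ᵐ X) : ℤ → X ≃ᵐ X
  | Int.ofNat n => mnpow T n
  | Int.negSucc n => mnpow T.symm (n + 1)

/-- An automorphism `T` of `(X, μ)` is mixing if `μ (Tⁿ A ∩ B) → μ A * μ B` as `n → ∞`. -/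
def Mixing (μ : Measure X) (T : X ≃ᵐ X) : Prop :=
  ∀ A B : Set X, MeasurableSet A → MeasurableSet B →
    Tendsto (fun n : ℕ => μ (mnpow T n '' A ∩ B)) atTop (nhds (μ A * μ B))

/-! The trimmed base `Ẽ = E \ (V E ∪ ⋯ ∪ V^{n-1} E)` is disjoint from `Vˡ E ⊇ Vˡ Ẽ` for
`0 < l < n`; as `V` is injective, `Vⁱ Ẽ ∩ Vʲ Ẽ = Vⁱ (Ẽ ∩ V^{j-i} Ẽ) = ∅` for `i < j < n`. What is
cut away is `E ∩ (V E ∪ ⋯ ∪ V^{n-1} E)`, of measure at most `∑ₗ μ (E ∩ Vˡ E) < (n - 1) b`. -/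

theorem coe_mnpow (T : X ≃ᵐ X) (k : ℕ) : ⇑(mnpow T k) = (⇑T)^[k] := by
  induction k with
  | zero => rfl
  | succ k ih =>
    change ⇑T ∘ ⇑(mnpow T k) = _
    rw [ih, ← Function.iterate_succ']

section Trim

variable {α : Type*} {f : α → α}

theorem disjoint_iterate_image_diff_of_lt (hf : Function.Injective f) (E : Set α) {n i j : ℕ}
    (hij : i < j) (hjn : j < n) :
    Disjoint (f^[i] '' (E \ ⋃ l ∈ Finset.Icc 1 (n - 1), f^[l] '' E))
      (f^[j] '' (E \ ⋃ l ∈ Finset.Icc 1 (n - 1), f^[l] '' E)) := by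
  rw [Set.disjoint_left]
  rintro x ⟨a, ⟨-, ha_trim⟩, rfl⟩ ⟨c, ⟨hcE, -⟩, hca⟩
  have hj : j = i + (j - i) := by omega
  have hac : a = f^[j - i] c := by
    rw [hj, Function.iterate_add_apply] at hca
    exact (hf.iterate i hca).symm
  have hji : j - i ∈ Finset.Icc 1 (n - 1) := Finset.mem_Icc.mpr ⟨by omega, by omega⟩
  exact ha_trim (Set.mem_biUnion hji ⟨c, hcE, hac.symm⟩)

theorem pairwiseDisjoint_iterate_image_diff (hf : Function.Injective f) (E : Set α) (n : ℕ) :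
    (Set.Iio n).PairwiseDisjoint
      fun i ↦ f^[i] '' (E \ ⋃ l ∈ Finset.Icc 1 (n - 1), f^[l] '' E) := by
  intro i hi j hj hij
  rcases hij.lt_or_gt with h | h
  · exact disjoint_iterate_image_diff_of_lt hf E h hj
  · exact (disjoint_iterate_image_diff_of_lt hf E h hi).symm

end Trim

theorem measureReal_biUnion_lt_card_mul {ι : Type*} (μ : Measure X)
    {s : Finset ι} (hs : s.Nonempty) (A : ι → Set X) {b : ℝ} (h : ∀ l ∈ s, μ.real (A l) < b) :
    μ.real (⋃ l ∈ s, A l) < s.card * b :=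
  calc μ.real (⋃ l ∈ s, A l)
      ≤ ∑ l ∈ s, μ.real (A l) := measureReal_biUnion_finset_le s A
    _ < ∑ _l ∈ s, b := Finset.sum_lt_sum_of_nonempty hs h
    _ = s.card * b := by rw [Finset.sum_const, nsmul_eq_mul]

theorem trimmed_base_gives_tower_general
    {X : Type*} [MeasurableSpace X]
    (μ : Measure X)
    (V : X ≃ᵐ X)
    (n : ℕ) (hn : 2 ≤ n) (b : ℝ)
    (E : Set X)
    (hsmall : ∀ i, 1 ≤ i → i ≤ n - 1 → (μ (E ∩ mnpow V i '' E)).toReal < b) :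
    (∀ i j, i < n → j < n → i ≠ j →
      Disjoint
        (mnpow V i '' (E \ ⋃ l ∈ Finset.Icc 1 (n - 1), mnpow V l '' E))
        (mnpow V j '' (E \ ⋃ l ∈ Finset.Icc 1 (n - 1), mnpow V l '' E))) ∧
    (μ (E ∆ (E \ ⋃ l ∈ Finset.Icc 1 (n - 1), mnpow V l '' E))).toReal
      < ((n : ℝ) - 1) * b := by
  simp only [coe_mnpow] at hsmall ⊢
  refine ⟨fun i j hi hj hij ↦ pairwiseDisjoint_iterate_image_diff V.injective E n hi hj hij, ?_⟩
  have hcut : E ∆ (E \ ⋃ l ∈ Finset.Icc 1 (n - 1), (⇑V)^[l] '' E)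
      = ⋃ l ∈ Finset.Icc 1 (n - 1), E ∩ (⇑V)^[l] '' E := by
    rw [symmDiff_of_ge sdiff_subset, sdiff_sdiff_right_self, inter_iUnion₂]
  have hcard : ((Finset.Icc 1 (n - 1)).card : ℝ) = n - 1 := by
    rw [Nat.card_Icc, Nat.add_sub_cancel, Nat.cast_sub (by omega), Nat.cast_one]
  rw [hcut, ← hcard]
  refine measureReal_biUnion_lt_card_mul μ (Finset.nonempty_Icc.mpr (by omega)) _ fun l hl ↦ ?_
  obtain ⟨hl₁, hl₂⟩ := Finset.mem_Icc.mp hl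
  exact hsmall l hl₁ hl₂

/-- If `E, SE, …, S^{n-1}E` are pairwise disjoint and
`μ (E ∩ Vⁱ E) < b` for `i = 1, …, n-1`, then, setting
`Ẽ = E \ (VE ∪ V²E ∪ … ∪ V^{n-1}E)`, the sets `Ẽ, VẼ, …, V^{n-1}Ẽ` are pairwise
disjoint and `μ (E Δ Ẽ) < (n-1) b`. -/
theorem trimmed_base_gives_tower
    {X : Type*} [MeasurableSpace X]
    (μ : Measure X) [IsProbabilityMeasure μ]
    (V S : X ≃ᵐ X) (hV : MeasurePreserving V μ μ) (hS : MeasurePreserving S μ μ)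
    (n : ℕ) (hn : 2 ≤ n) (b : ℝ) (hb : 0 < b)
    (E : Set X) (hE : MeasurableSet E)
    (hSdisj : ∀ i j, i < n → j < n → i ≠ j → Disjoint (mnpow S i '' E) (mnpow S j '' E))
    (hsmall : ∀ i, 1 ≤ i → i ≤ n - 1 → (μ (E ∩ mnpow V i '' E)).toReal < b) :
    (∀ i j, i < n → j < n → i ≠ j →
      Disjoint
        (mnpow V i '' (E \ ⋃ l ∈ Finset.Icc 1 (n - 1), mnpow V l '' E))
        (mnpow V j '' (E \ ⋃ l ∈ Finset.Icc 1 (n - 1), mnpow V l '' E))) ∧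
    (μ (E ∆ (E \ ⋃ l ∈ Finset.Icc 1 (n - 1), mnpow V l '' E))).toReal
      < ((n : ℝ) - 1) * b :=
  trimmed_base_gives_tower_general μ V n hn b E hsmall
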